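/- Let f : ℝ → ℝ be smooth and β real, c ≠ 0 real constants. If p, v : ℝ × ℝ → ℝ are smooth and satisfy the system ∂²ₓv = f′(p)·∂ₜp − β ∂²ₓp and ∂ₜv = c² p at every point, then: (i) p solves the generalized Westervelt equation ∂²ₜ(f(p)) − β ∂ₜ∂²ₓp = c² ∂²ₓp at every point, and (ii) v solves the potential equation ∂ₜ( f(∂ₜv / c²) − (β/c²) ∂²ₓv ) = ∂²ₓv at every point. -/

import Mathlib

noncomputable def Dt (F : ℝ × ℝ → ℝ) : ℝ × ℝ → ℝ :=
  fun z => deriv (fun s => F (s, z.2)) z.1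

noncomputable def Dx (F : ℝ × ℝ → ℝ) : ℝ × ℝ → ℝ :=
  fun z => deriv (fun y => F (z.1, y)) z.2

section aux

variable {F G : ℝ × ℝ → ℝ}

lemma sliceT_contDiff (hF : ContDiff ℝ (⊤ : ℕ∞) F) (b : ℝ) :
    ContDiff ℝ (⊤ : ℕ∞) (fun s => F (s, b)) :=
  hF.comp (contDiff_id.prodMk contDiff_const)

lemma sliceX_contDiff (hF : ContDiff ℝ (⊤ : ℕ∞) F) (a : ℝ) :
    ContDiff ℝ (⊤ : ℕ∞) (fun y => F (a, y)) :=
  hF.comp (contDiff_const.prodMk contDiff_id)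

lemma Dt_eq_fderiv (hF : ContDiff ℝ (⊤ : ℕ∞) F) :
    Dt F = fun z => fderiv ℝ F z ((1 : ℝ), (0 : ℝ)) := by
  funext z
  have h1 : HasDerivAt (fun s : ℝ => ((s, z.2) : ℝ × ℝ)) ((1 : ℝ), (0 : ℝ)) z.1 :=
    (hasDerivAt_id z.1).prodMk (hasDerivAt_const z.1 z.2)
  have h2 : HasFDerivAt F (fderiv ℝ F (z.1, z.2)) (z.1, z.2) :=
    (hF.differentiable (by simp) (z.1, z.2)).hasFDerivAt
  have h3 := h2.comp_hasDerivAt z.1 h1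
  simpa [Dt, Function.comp_def] using h3.deriv

lemma Dx_eq_fderiv (hF : ContDiff ℝ (⊤ : ℕ∞) F) :
    Dx F = fun z => fderiv ℝ F z ((0 : ℝ), (1 : ℝ)) := by
  funext z
  have h1 : HasDerivAt (fun y : ℝ => ((z.1, y) : ℝ × ℝ)) ((0 : ℝ), (1 : ℝ)) z.2 :=
    (hasDerivAt_const z.2 z.1).prodMk (hasDerivAt_id z.2)
  have h2 : HasFDerivAt F (fderiv ℝ F (z.1, z.2)) (z.1, z.2) :=
    (hF.differentiable (by simp) (z.1, z.2)).hasFDerivAt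
  have h3 := h2.comp_hasDerivAt z.2 h1
  simpa [Dx, Function.comp_def] using h3.deriv

lemma Dt_contDiff (hF : ContDiff ℝ (⊤ : ℕ∞) F) : ContDiff ℝ (⊤ : ℕ∞) (Dt F) := by
  rw [Dt_eq_fderiv hF]
  exact (hF.fderiv_right (by simp)).clm_apply contDiff_const

lemma Dx_contDiff (hF : ContDiff ℝ (⊤ : ℕ∞) F) : ContDiff ℝ (⊤ : ℕ∞) (Dx F) := by
  rw [Dx_eq_fderiv hF]
  exact (hF.fderiv_right (by simp)).clm_apply contDiff_const

lemma fderiv_apply_const (hF : ContDiff ℝ (⊤ : ℕ∞) F) (z w u : ℝ × ℝ) :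
    fderiv ℝ (fun y => fderiv ℝ F y w) z u = fderiv ℝ (fderiv ℝ F) z u w := by
  have hd : DifferentiableAt ℝ (fderiv ℝ F) z :=
    ((hF.fderiv_right (m := (⊤ : ℕ∞)) (by simp)).differentiable (by simp)) z
  rw [fderiv_clm_apply hd (differentiableAt_const w)]
  simp

lemma Dt_Dx_comm (hF : ContDiff ℝ (⊤ : ℕ∞) F) (z : ℝ × ℝ) :
    Dt (Dx F) z = Dx (Dt F) z := by
  have hDx := Dx_contDiff hF
  have hDt := Dt_contDiff hF
  rw [Dt_eq_fderiv hDx, Dx_eq_fderiv hDt]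
  simp only [Dx_eq_fderiv hF, Dt_eq_fderiv hF]
  rw [fderiv_apply_const hF, fderiv_apply_const hF]
  exact (hF.contDiffAt.isSymmSndFDerivAt (by rw [minSmoothness_of_isRCLikeNormedField]; exact WithTop.coe_le_coe.mpr (le_top : (2 : ℕ∞) ≤ ⊤))) _ _

lemma Dt_chain (f : ℝ → ℝ) (hf : ContDiff ℝ (⊤ : ℕ∞) f) (hF : ContDiff ℝ (⊤ : ℕ∞) F) (z : ℝ × ℝ) :
    Dt (fun w => f (F w)) z = deriv f (F z) * Dt F z := by
  have hg : DifferentiableAt ℝ (fun s => F (s, z.2)) z.1 :=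
    ((sliceT_contDiff hF z.2).differentiable (by simp)) z.1
  have := deriv_comp z.1 ((hf.differentiable (by simp)) (F (z.1, z.2))) hg
  simpa [Dt, Function.comp_def] using this

lemma Dt_sub_const_mul (hF : ContDiff ℝ (⊤ : ℕ∞) F) (hG : ContDiff ℝ (⊤ : ℕ∞) G) (r : ℝ) (z : ℝ × ℝ) :
    Dt (fun w => F w - r * G w) z = Dt F z - r * Dt G z := by
  have hFd : DifferentiableAt ℝ (fun s => F (s, z.2)) z.1 :=
    ((sliceT_contDiff hF z.2).differentiable (by simp)) z.1
  have hGd : DifferentiableAt ℝ (fun s => G (s, z.2)) z.1 :=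
    ((sliceT_contDiff hG z.2).differentiable (by simp)) z.1
  simp only [Dt]
  rw [deriv_fun_sub hFd (hGd.const_mul r), deriv_const_mul r hGd]

lemma Dx_const_mul (hF : ContDiff ℝ (⊤ : ℕ∞) F) (r : ℝ) (z : ℝ × ℝ) :
    Dx (fun w => r * F w) z = r * Dx F z := by
  have hFd : DifferentiableAt ℝ (fun y => F (z.1, y)) z.2 :=
    ((sliceX_contDiff hF z.1).differentiable (by simp)) z.2
  simp only [Dx]
  rw [deriv_const_mul r hFd]

end aux

/-- First layer of the second potential system: if `vₓₓ = f'(p) pₜ − β pₓₓ` and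
`vₜ = c² p`, then `p` solves the generalized Westervelt equation and `v` solves
the potential equation `(f(vₜ/c²) − (β/c²) vₓₓ)ₜ = vₓₓ`. -/
theorem secondPotential_firstLayer_projections
    (f : ℝ → ℝ) (hf : ContDiff ℝ (⊤ : ℕ∞) f) (β c : ℝ) (hc : c ≠ 0)
    (p v : ℝ × ℝ → ℝ) (hp : ContDiff ℝ (⊤ : ℕ∞) p) (hv : ContDiff ℝ (⊤ : ℕ∞) v)
    (hsys : ∀ z : ℝ × ℝ,
      Dx (Dx v) z = deriv f (p z) * Dt p z - β * Dx (Dx p) z ∧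
      Dt v z = c ^ 2 * p z) :
    (∀ z : ℝ × ℝ,
      Dt (Dt (fun w => f (p w))) z - β * Dt (Dx (Dx p)) z = c ^ 2 * Dx (Dx p) z) ∧
    (∀ z : ℝ × ℝ,
      Dt (fun w => f (Dt v w / c ^ 2) - (β / c ^ 2) * Dx (Dx v) w) z = Dx (Dx v) z) := by
  have hDxDxv : ContDiff ℝ (⊤ : ℕ∞) (Dx (Dx v)) := Dx_contDiff (Dx_contDiff hv)
  have hDxDxp : ContDiff ℝ (⊤ : ℕ∞) (Dx (Dx p)) := Dx_contDiff (Dx_contDiff hp)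
  have hfp : ContDiff ℝ (⊤ : ℕ∞) (fun w => f (p w)) := hf.comp hp
  -- Dt (f ∘ p) = Dx Dx v + β Dx Dx p (as functions)
  have key : Dt (fun w => f (p w)) =
      fun w => Dx (Dx v) w - (-β) * Dx (Dx p) w := by
    funext z
    rw [Dt_chain f hf hp z, (hsys z).1]
    ring
  -- Dt v = c² p
  have hvt : Dt v = fun w => c ^ 2 * p w := funext fun z => (hsys z).2
  -- Dt (Dx Dx v) = c² Dx Dx p
  have swap : ∀ z, Dt (Dx (Dx v)) z = c ^ 2 * Dx (Dx p) z := by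
    intro z
    rw [Dt_Dx_comm (Dx_contDiff hv) z]
    have h2 : Dt (Dx v) = Dx (Dt v) := funext fun w => Dt_Dx_comm hv w
    rw [show Dx (Dt (Dx v)) z = Dx (Dx (Dt v)) z by rw [h2]]
    rw [hvt]
    have h3 : Dx (fun w => c ^ 2 * p w) = fun w => c ^ 2 * Dx p w :=
      funext fun w => Dx_const_mul hp (c ^ 2) w
    calc Dx (Dx fun w => c ^ 2 * p w) z = Dx (fun w => c ^ 2 * Dx p w) z := by rw [h3]
    _ = c ^ 2 * Dx (Dx p) z := Dx_const_mul (Dx_contDiff hp) (c ^ 2) z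
  constructor
  · intro z
    rw [key, Dt_sub_const_mul hDxDxv hDxDxp (-β) z, swap z]
    ring
  · intro z
    have hinner : (fun w => f (Dt v w / c ^ 2) - (β / c ^ 2) * Dx (Dx v) w) =
        fun w => (fun u => f (p u)) w - (β / c ^ 2) * Dx (Dx v) w := by
      funext w
      rw [(hsys w).2]
      field_simp
    rw [hinner, Dt_sub_const_mul hfp hDxDxv (β / c ^ 2) z, key, swap z]
    field_simp
    ring
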